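/- arXiv:2105.00151 — 2 statements merged into one kernel-verified Lean document; each statement's English description precedes it below -/
import Mathlib

section
/- Let Ω ⊆ ℝ² be a nonempty compact convex set and C ⊆ Ω a nonempty compact set. Then the Lebesgue measure of {(θ,ρ) ∈ [0,2π) × ℝ : R(θ,ρ) ∩ C = ∅ ∧ G(θ,ρ) ∩ Ω ≠ ∅} equals P(Ω) − P(C). (Measure form of Eq. (3) of the paper / Theorem 2: the measure of disaster half-planes that miss C while the boundary line meets Ω equals ℒ(Ω) − ℒ(conv C).) -/
open MeasureTheory Real Set
open scoped InnerProductSpace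

/-! For a direction `θ`, write `h_X(θ)` for the support function of `X` in direction `u θ`.
The half-plane `R(θ,ρ)` misses the compact set `C` exactly when `ρ > h_C(θ)`, and by convexity
the line `G(θ,ρ)` meets `Ω` exactly when `ρ` lies between the minimum and the maximum `h_Ω(θ)` of
`⟪·, u θ⟫` on `Ω`; since `C ⊆ Ω` the lower bound is automatic once `ρ > h_C(θ)`. So the region is
the set between the graphs of `h_C` and `h_Ω` over `[0, 2π)`, whose measure is
`∫ (h_Ω - h_C) = P Ω - P C` by Fubini. Support functions of bounded sets are Lipschitz in the
direction, which gives the measurability and integrability needed. -/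

noncomputable def u (θ : ℝ) : EuclideanSpace ℝ (Fin 2) :=
  WithLp.toLp 2 ![Real.cos θ, Real.sin θ]

/-- The (directed) line with normal direction `u θ` at signed distance `ρ`. -/
def G (θ ρ : ℝ) : Set (EuclideanSpace ℝ (Fin 2)) :=
  {x | ⟪x, u θ⟫_ℝ = ρ}

/-- The disaster area: the closed half-plane to the `u θ` side of the line `G θ ρ`. -/
def R (θ ρ : ℝ) : Set (EuclideanSpace ℝ (Fin 2)) :=
  {x | ⟪x, u θ⟫_ℝ ≥ ρ}

/-- Support integral: integral of the support function over all directions;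
equals the perimeter of the convex hull. -/
noncomputable def P (X : Set (EuclideanSpace ℝ (Fin 2))) : ℝ :=
  ∫ θ in (0:ℝ)..(2 * Real.pi), sSup {r : ℝ | ∃ x ∈ X, r = ⟪x, u θ⟫_ℝ}

section RegionBetween

variable {α : Type*} [MeasurableSpace α] {μ : Measure α} {f g : α → ℝ} {s : Set α}

theorem volume_region_between_oc_eq_lintegral (hf : Measurable f) (hg : Measurable g)
    (hs : MeasurableSet s) :
    μ.prod volume {p : α × ℝ | p.1 ∈ s ∧ p.2 ∈ Ioc (f p.1) (g p.1)} =
      ∫⁻ y in s, ENNReal.ofReal (g y - f y) ∂μ := by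
  rw [Measure.prod_apply (measurableSet_region_between_oc hf hg hs), ← lintegral_indicator hs]
  congr 1 with x
  by_cases hx : x ∈ s
  · simp only [hx, indicator_of_mem, preimage, mem_ofPred_eq, true_and]
    exact Real.volume_Ioc
  · simp [hx, preimage]

theorem volume_region_between_oc_eq_integral [SigmaFinite μ] (hf : Measurable f)
    (hg : Measurable g) (f_int : IntegrableOn f s μ) (g_int : IntegrableOn g s μ)
    (hs : MeasurableSet s) (hfg : ∀ x ∈ s, f x ≤ g x) :
    μ.prod volume {p : α × ℝ | p.1 ∈ s ∧ p.2 ∈ Ioc (f p.1) (g p.1)} =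
      ENNReal.ofReal (∫ y in s, g y - f y ∂μ) := by
  have hint : IntegrableOn (fun y => g y - f y) s μ := g_int.sub f_int
  rw [volume_region_between_oc_eq_lintegral hf hg hs, ofReal_integral_eq_lintegral_ofReal hint]
  exact (ae_restrict_iff' hs).mpr (.of_forall fun x hx => sub_nonneg.mpr (hfg x hx))

end RegionBetween

section SupportFunction

variable {E : Type*} [NormedAddCommGroup E] [InnerProductSpace ℝ E] {X Y : Set E}

noncomputable def supportFunction (X : Set E) (v : E) : ℝ :=
  sSup ((fun x => ⟪x, v⟫_ℝ) '' X)

theorem IsCompact.bddAbove_image_inner (hX : IsCompact X) (v : E) :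
    BddAbove ((fun x => ⟪x, v⟫_ℝ) '' X) :=
  (hX.image (continuous_id.inner continuous_const)).bddAbove

theorem IsCompact.inner_le_supportFunction (hX : IsCompact X) (v : E) {x : E} (hx : x ∈ X) :
    ⟪x, v⟫_ℝ ≤ supportFunction X v :=
  le_csSup (hX.bddAbove_image_inner v) (mem_image_of_mem _ hx)

theorem IsCompact.exists_inner_eq_supportFunction (hX : IsCompact X) (hne : X.Nonempty) (v : E) :
    ∃ x ∈ X, ⟪x, v⟫_ℝ = supportFunction X v :=
  (hX.image (continuous_id.inner continuous_const)).sSup_mem (hne.image _)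

theorem supportFunction_mono (hY : IsCompact Y) (hne : X.Nonempty) (hXY : X ⊆ Y) (v : E) :
    supportFunction X v ≤ supportFunction Y v :=
  csSup_le_csSup (hY.bddAbove_image_inner v) (hne.image _) (image_mono hXY)

theorem IsCompact.supportFunction_le_add_mul_norm_sub {M : ℝ} (hX : IsCompact X)
    (hne : X.Nonempty) (hM : ∀ x ∈ X, ‖x‖ ≤ M) (v w : E) :
    supportFunction X v ≤ supportFunction X w + M * ‖v - w‖ := by
  refine csSup_le (hne.image _) ?_
  rintro r ⟨x, hx, rfl⟩
  calc ⟪x, v⟫_ℝ = ⟪x, w⟫_ℝ + ⟪x, v - w⟫_ℝ := by rw [inner_sub_right]; ring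
    _ ≤ supportFunction X w + M * ‖v - w‖ := add_le_add (hX.inner_le_supportFunction w hx)
      ((real_inner_le_norm x (v - w)).trans (by gcongr; exact hM x hx))

theorem IsCompact.continuous_supportFunction (hX : IsCompact X) (hne : X.Nonempty) :
    Continuous (supportFunction X) := by
  obtain ⟨M, hM⟩ := isBounded_iff_forall_norm_le.mp hX.isBounded
  refine (LipschitzWith.of_le_add_mul M.toNNReal fun v w => ?_).continuous
  rw [dist_eq_norm]
  exact hX.supportFunction_le_add_mul_norm_sub hne
    (fun x hx => (hM x hx).trans (le_coe_toNNReal M)) v w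

variable {Ω C : Set E}

theorem IsCompact.halfspace_inter_eq_empty_iff (hC : IsCompact C) (hne : C.Nonempty) (v : E)
    (ρ : ℝ) : {x | ρ ≤ ⟪x, v⟫_ℝ} ∩ C = ∅ ↔ supportFunction C v < ρ := by
  constructor
  · intro h
    obtain ⟨x, hx, hxv⟩ := hC.exists_inner_eq_supportFunction hne v
    by_contra! hle
    exact eq_empty_iff_forall_notMem.mp h x ⟨hle.trans_eq hxv.symm, hx⟩
  · intro h
    refine eq_empty_of_forall_notMem fun x ⟨hρ, hx⟩ => ?_
    exact (h.trans_le hρ).not_ge (hC.inner_le_supportFunction v hx)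

theorem Convex.exists_mem_inner_eq (hΩ : Convex ℝ Ω) {x₀ x₁ : E} (h₀ : x₀ ∈ Ω) (h₁ : x₁ ∈ Ω)
    {v : E} {ρ : ℝ} (hρ : ρ ∈ Icc ⟪x₀, v⟫_ℝ ⟪x₁, v⟫_ℝ) : ∃ x ∈ Ω, ⟪x, v⟫_ℝ = ρ :=
  hΩ.isPreconnected.intermediate_value h₀ h₁
    (continuous_id.inner continuous_const).continuousOn hρ

theorem setOf_halfspace_disjoint_and_hyperplane_meets_eq_Ioc (hΩ : IsCompact Ω)
    (hΩconv : Convex ℝ Ω) (hC : IsCompact C) (hCne : C.Nonempty) (hCΩ : C ⊆ Ω) (v : E) :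
    {ρ : ℝ | {x | ρ ≤ ⟪x, v⟫_ℝ} ∩ C = ∅ ∧ ({x | ⟪x, v⟫_ℝ = ρ} ∩ Ω).Nonempty} =
      Ioc (supportFunction C v) (supportFunction Ω v) := by
  ext ρ
  simp only [mem_ofPred_eq, hC.halfspace_inter_eq_empty_iff hCne, mem_Ioc, and_congr_right_iff]
  intro hCρ
  constructor
  · rintro ⟨x, hxρ, hx⟩
    exact hxρ ▸ hΩ.inner_le_supportFunction v hx
  · intro hρΩ
    obtain ⟨x₀, hx₀, hx₀v⟩ := hC.exists_inner_eq_supportFunction hCne v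
    obtain ⟨x₁, hx₁, hx₁v⟩ := hΩ.exists_inner_eq_supportFunction (hCne.mono hCΩ) v
    obtain ⟨x, hx, hxρ⟩ :=
      hΩconv.exists_mem_inner_eq (hCΩ hx₀) hx₁ ⟨hx₀v ▸ hCρ.le, hx₁v ▸ hρΩ⟩
    exact ⟨x, hxρ, hx⟩

end SupportFunction

theorem continuous_u : Continuous u := by
  unfold u; fun_prop

theorem P_eq_integral_supportFunction (X : Set (EuclideanSpace ℝ (Fin 2))) :
    P X = ∫ θ in (0:ℝ)..(2 * π), supportFunction X (u θ) := by
  unfold P supportFunction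
  congr with θ
  congr with r
  simp [eq_comm]

theorem stmt_3_general (Ω C : Set (EuclideanSpace ℝ (Fin 2)))
    (hΩc : IsCompact Ω) (hΩconv : Convex ℝ Ω)
    (hCc : IsCompact C) (hCne : C.Nonempty) (hCΩ : C ⊆ Ω) :
    volume {p : ℝ × ℝ | p ∈ Set.Ico 0 (2 * Real.pi) ×ˢ (Set.univ : Set ℝ) ∧
        R p.1 p.2 ∩ C = ∅ ∧ (G p.1 p.2 ∩ Ω).Nonempty}
      = ENNReal.ofReal (P Ω - P C) := by
  have hΩu : Continuous fun θ => supportFunction Ω (u θ) :=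
    (hΩc.continuous_supportFunction (hCne.mono hCΩ)).comp continuous_u
  have hCu : Continuous fun θ => supportFunction C (u θ) :=
    (hCc.continuous_supportFunction hCne).comp continuous_u
  calc _ = volume.prod volume {p : ℝ × ℝ | p.1 ∈ Ico 0 (2 * π) ∧
        p.2 ∈ Ioc (supportFunction C (u p.1)) (supportFunction Ω (u p.1))} := by
        rw [Measure.volume_eq_prod]
        congr with ⟨θ, ρ⟩
        rw [← setOf_halfspace_disjoint_and_hyperplane_meets_eq_Ioc hΩc hΩconv hCc hCne hCΩ]
        simp only [mem_prod, mem_univ, and_true, mem_ofPred_eq]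
        rfl
    _ = ENNReal.ofReal (∫ θ in Ico 0 (2 * π), supportFunction Ω (u θ) - supportFunction C (u θ)) :=
        volume_region_between_oc_eq_integral hCu.measurable hΩu.measurable
          (hCu.integrableOn_Icc.mono_set Ico_subset_Icc_self)
          (hΩu.integrableOn_Icc.mono_set Ico_subset_Icc_self) measurableSet_Ico
          fun θ _ => supportFunction_mono hΩc hCne hCΩ (u θ)
    _ = ENNReal.ofReal (P Ω - P C) := by
        rw [P_eq_integral_supportFunction, P_eq_integral_supportFunction,
          ← intervalIntegral.integral_sub (hΩu.intervalIntegrable _ _) (hCu.intervalIntegrable _ _),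
          intervalIntegral.integral_of_le (by positivity), integral_Ico_eq_integral_Ioc]

/-- Measure form of Eq. (3) of the paper: the measure of disaster half-planes missing `C`
while the boundary line meets `Ω` equals `ℒ(Ω) − ℒ(conv C)`. -/
theorem stmt_3 (Ω C : Set (EuclideanSpace ℝ (Fin 2)))
    (hΩc : IsCompact Ω) (hΩconv : Convex ℝ Ω) (hΩne : Ω.Nonempty)
    (hCc : IsCompact C) (hCne : C.Nonempty) (hCΩ : C ⊆ Ω) :
    volume {p : ℝ × ℝ | p ∈ Set.Ico 0 (2 * Real.pi) ×ˢ (Set.univ : Set ℝ) ∧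
        R p.1 p.2 ∩ C = ∅ ∧ (G p.1 p.2 ∩ Ω).Nonempty}
      = ENNReal.ofReal (P Ω - P C) :=
  stmt_3_general Ω C hΩc hΩconv hCc hCne hCΩ
end

section
/- Let K ⊆ ℝ² be a nonempty compact convex set and let s, t ∈ frontier K. Then for every (θ,ρ): there exists a connected set S ⊆ frontier K with s ∈ S, t ∈ S and S ∩ R(θ,ρ) = ∅ if and only if segment ℝ s t ∩ R(θ,ρ) = ∅. (Corollary 3 of the paper specialized to a convex two-route network without inner parts: under the weakest arrangement, the network frontier K and the equivalent single-route network N₀ = l(s,t) are connected or disconnected by a half-plane disaster simultaneously; in particular, if s and t are not in the disaster half-plane then some boundary arc of K joining s to t avoids the disaster.) -/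
/-!
Project `[s, t]` radially onto `frontier K` from an interior point `z ∉ [s, t]`, using the gauge
of `K` centred at `z`. If `f` is the linear functional cutting out the half-plane and
`f z ≥ max (f s) (f t)`, then moving outward along rays from `z` does not increase `f`, so the
projected arc stays off the half-plane; if no interior point has `f > max (f s) (f t)`, all of
`K` lies below that level anyway. When `K` has empty interior, `frontier K = K ⊇ [s, t]`.
Conversely the complement of the half-plane is convex, so it contains `[s, t]` with `s` and `t`.
-/

open MeasureTheory Real Set
open scoped InnerProductSpace

open Module Topology

theorem preimage_add_left_mem_nhds_zero {M : Type*} [AddGroup M] [TopologicalSpace M]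
    [ContinuousAdd M] {K : Set M} {z : M} (hz : z ∈ interior K) : (z + ·) ⁻¹' K ∈ 𝓝 0 :=
  (continuous_const_add z).continuousAt.preimage_mem_nhds
    (by simpa using mem_interior_iff_mem_nhds.1 hz)

variable {E : Type*} [NormedAddCommGroup E] [NormedSpace ℝ E]

theorem interior_segment_eq_empty [FiniteDimensional ℝ E] (hE : 2 ≤ finrank ℝ E) (s t : E) :
    interior (segment ℝ s t) = ∅ := by
  rw [← not_nonempty_iff_eq_empty, ← convexHull_pair,
    interior_convexHull_nonempty_iff_affineSpan_eq_top]
  intro h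
  have hspan : vectorSpan ℝ {s, t} = ⊤ := by
    rw [← direction_affineSpan, h, AffineSubspace.direction_top]
  have := (collinear_pair ℝ s t).finrank_le_one
  rw [hspan, finrank_top] at this
  omega

theorem IsOpen.exists_mem_notMem_segment [FiniteDimensional ℝ E] (hE : 2 ≤ finrank ℝ E)
    {U : Set E} (hU : IsOpen U) (hne : U.Nonempty) (s t : E) : ∃ z ∈ U, z ∉ segment ℝ s t := by
  by_contra! h
  obtain ⟨z, hz⟩ := hne
  simpa [interior_segment_eq_empty hE s t] using hU.subset_interior_iff.2 h hz

/-- The point where the ray from `z` through `x` leaves `K`. -/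
noncomputable def radialProjection (K : Set E) (z x : E) : E :=
  z + (gauge ((z + ·) ⁻¹' K) (x - z))⁻¹ • (x - z)

section radialProjection

variable {K : Set E} {z x : E}

theorem gauge_preimage_add_left_eq_one_iff (hK : Convex ℝ K) (hz : z ∈ interior K) :
    gauge ((z + ·) ⁻¹' K) (x - z) = 1 ↔ x ∈ frontier K := by
  rw [gauge_eq_one_iff_mem_frontier (hK.translate_preimage_right z)
    (preimage_add_left_mem_nhds_zero hz)]
  change x - z ∈ frontier (Homeomorph.addLeft z ⁻¹' K) ↔ _
  rw [← (Homeomorph.addLeft z).preimage_frontier]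
  simp

theorem gauge_preimage_add_left_pos (hKb : Bornology.IsBounded K) (hz : z ∈ interior K)
    (hx : x ≠ z) : 0 < gauge ((z + ·) ⁻¹' K) (x - z) := by
  refine (gauge_pos (absorbent_nhds_zero (preimage_add_left_mem_nhds_zero hz)) ?_).2
    (sub_ne_zero.2 hx)
  exact (NormedSpace.isVonNBounded_iff ℝ).2
    ((IsometryEquiv.addLeft z).isometry.antilipschitz.isBounded_preimage hKb)

theorem radialProjection_mem_frontier (hK : Convex ℝ K) (hKb : Bornology.IsBounded K)
    (hz : z ∈ interior K) (hx : x ≠ z) : radialProjection K z x ∈ frontier K := by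
  have hpos := gauge_preimage_add_left_pos hKb hz hx
  rw [← gauge_preimage_add_left_eq_one_iff hK hz, radialProjection, add_sub_cancel_left,
    gauge_smul_of_nonneg (inv_nonneg.2 hpos.le), smul_eq_mul, inv_mul_cancel₀ hpos.ne']

theorem radialProjection_eq_self (hK : Convex ℝ K) (hz : z ∈ interior K) (hx : x ∈ frontier K) :
    radialProjection K z x = x := by
  rw [radialProjection, (gauge_preimage_add_left_eq_one_iff hK hz).2 hx, inv_one, one_smul,
    add_sub_cancel]

theorem continuousOn_radialProjection (hK : Convex ℝ K) (hKb : Bornology.IsBounded K)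
    (hz : z ∈ interior K) : ContinuousOn (radialProjection K z) {z}ᶜ := by
  have hg := (continuous_gauge (hK.translate_preimage_right z)
    (preimage_add_left_mem_nhds_zero hz)).comp (continuous_sub_right z)
  refine continuousOn_const.add (ContinuousOn.smul ?_ (continuous_sub_right z).continuousOn)
  exact hg.continuousOn.inv₀ fun x hx => (gauge_preimage_add_left_pos hKb hz hx).ne'

theorem apply_radialProjection_le (hKb : Bornology.IsBounded K) (hz : z ∈ interior K)
    (hxK : x ∈ K) (hx : x ≠ z) (f : E →ₗ[ℝ] ℝ) (hf : f x ≤ f z) :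
    f (radialProjection K z x) ≤ f x := by
  have hpos := gauge_preimage_add_left_pos hKb hz hx
  have hr : 1 ≤ (gauge ((z + ·) ⁻¹' K) (x - z))⁻¹ :=
    (one_le_inv₀ hpos).2 (gauge_le_one_of_mem (by simpa using hxK))
  rw [radialProjection, map_add, map_smul, map_sub, smul_eq_mul]
  nlinarith

end radialProjection

/-- A centre for projecting `[s, t]` radially while keeping `f ≤ c` on the image. -/
theorem Convex.exists_mem_interior_notMem_segment [FiniteDimensional ℝ E]
    (hE : 2 ≤ finrank ℝ E) {K : Set E} (hK : Convex ℝ K) (hint : (interior K).Nonempty)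
    (s t : E) (f : E →ₗ[ℝ] ℝ) (c : ℝ) :
    ∃ z ∈ interior K, z ∉ segment ℝ s t ∧ (c ≤ f z ∨ K ⊆ {x | f x ≤ c}) := by
  have hf : Continuous f := f.continuous_of_finiteDimensional
  by_cases hV : (interior K ∩ {x | c < f x}).Nonempty
  · obtain ⟨z, ⟨hzK, hzc⟩, hzseg⟩ :=
      (isOpen_interior.inter (isOpen_lt continuous_const hf)).exists_mem_notMem_segment hE hV s t
    exact ⟨z, hzK, hzseg, Or.inl hzc.le⟩
  obtain ⟨z, hzK, hzseg⟩ := isOpen_interior.exists_mem_notMem_segment hE hint s t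
  refine ⟨z, hzK, hzseg, Or.inr ?_⟩
  calc K ⊆ closure (interior K) := by
        rw [hK.closure_interior_eq_closure_of_nonempty_interior hint]; exact subset_closure
    _ ⊆ {x | f x ≤ c} :=
        closure_minimal (fun x hx => show f x ≤ c from not_lt.1 fun h => hV ⟨x, hx, h⟩)
          (isClosed_le hf continuous_const)

theorem exists_isConnected_subset_frontier_forall_lt [FiniteDimensional ℝ E]
    (hE : 2 ≤ finrank ℝ E) {K : Set E} (hKcl : IsClosed K) (hKb : Bornology.IsBounded K)
    (hK : Convex ℝ K) {s t : E} (hs : s ∈ frontier K) (ht : t ∈ frontier K)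
    (f : E →ₗ[ℝ] ℝ) {ρ : ℝ} (hfs : f s < ρ) (hft : f t < ρ) :
    ∃ S ⊆ frontier K, IsConnected S ∧ s ∈ S ∧ t ∈ S ∧ ∀ y ∈ S, f y < ρ := by
  have hstK : segment ℝ s t ⊆ K :=
    hK.segment_subset (hKcl.frontier_subset hs) (hKcl.frontier_subset ht)
  have hconn : IsConnected (segment ℝ s t) :=
    (convex_segment s t).isConnected ⟨s, left_mem_segment ℝ s t⟩
  by_cases hint : (interior K).Nonempty
  swap
  · have hfr : frontier K = K := by
      rw [hKcl.frontier_eq, not_nonempty_iff_eq_empty.1 hint, sdiff_empty]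
    exact ⟨segment ℝ s t, by rwa [hfr], hconn, left_mem_segment ℝ s t, right_mem_segment ℝ s t,
      (convex_halfSpace_lt f.isLinear ρ).segment_subset hfs hft⟩
  set c := max (f s) (f t)
  have hseg : segment ℝ s t ⊆ {w | f w ≤ c} :=
    (convex_halfSpace_le f.isLinear c).segment_subset (le_max_left (f s) (f t))
      (le_max_right (f s) (f t))
  obtain ⟨z, hzK, hzseg, hz⟩ := hK.exists_mem_interior_notMem_segment hE hint s t f c
  have hne : ∀ w ∈ segment ℝ s t, w ≠ z := fun w hw => ne_of_mem_of_not_mem hw hzseg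
  have hfrontier : ∀ w ∈ segment ℝ s t, radialProjection K z w ∈ frontier K :=
    fun w hw => radialProjection_mem_frontier hK hKb hzK (hne w hw)
  refine ⟨radialProjection K z '' segment ℝ s t, image_subset_iff.2 hfrontier,
    hconn.image _ ((continuousOn_radialProjection hK hKb hzK).mono hne),
    ⟨s, left_mem_segment ℝ s t, radialProjection_eq_self hK hzK hs⟩,
    ⟨t, right_mem_segment ℝ s t, radialProjection_eq_self hK hzK ht⟩, ?_⟩
  rintro _ ⟨w, hw, rfl⟩
  refine lt_of_le_of_lt ?_ (max_lt hfs hft)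
  rcases hz with hzc | hKc
  · exact (apply_radialProjection_le hKb hzK (hstK hw) (hne w hw) f ((hseg hw).trans hzc)).trans
      (hseg hw)
  · exact hKc (hKcl.frontier_subset (hfrontier w hw))

theorem stmt_13_general (K : Set (EuclideanSpace ℝ (Fin 2)))
    (hKc : IsCompact K) (hKconv : Convex ℝ K)
    (s t : EuclideanSpace ℝ (Fin 2)) (hs : s ∈ frontier K) (ht : t ∈ frontier K)
    (θ ρ : ℝ) :
    (∃ S : Set (EuclideanSpace ℝ (Fin 2)), S ⊆ frontier K ∧ IsConnected S ∧
        s ∈ S ∧ t ∈ S ∧ S ∩ R θ ρ = ∅)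
      ↔ segment ℝ s t ∩ R θ ρ = ∅ := by
  set f : EuclideanSpace ℝ (Fin 2) →ₗ[ℝ] ℝ := (innerₗ _).flip (u θ)
  have hR : ∀ X, X ∩ R θ ρ = ∅ ↔ ∀ x ∈ X, f x < ρ := fun X => by
    simp [f, R, eq_empty_iff_forall_notMem, real_inner_comm]
  simp only [hR]
  constructor
  · rintro ⟨S, -, -, hsS, htS, hS⟩
    exact (convex_halfSpace_lt f.isLinear ρ).segment_subset (hS s hsS) (hS t htS)
  · intro hseg
    exact exists_isConnected_subset_frontier_forall_lt finrank_euclideanSpace_fin.ge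
      hKc.isClosed hKc.isBounded hKconv hs ht f (hseg s (left_mem_segment ℝ s t))
      (hseg t (right_mem_segment ℝ s t))

/-- Corollary 3 of the paper for a convex two-route network without inner parts:
the boundary network `frontier K` and the equivalent single-route network
`N₀ = l(s,t)` are connected or disconnected by a half-plane disaster simultaneously. -/
theorem stmt_13 (K : Set (EuclideanSpace ℝ (Fin 2)))
    (hKc : IsCompact K) (hKconv : Convex ℝ K) (hKne : K.Nonempty)
    (s t : EuclideanSpace ℝ (Fin 2)) (hs : s ∈ frontier K) (ht : t ∈ frontier K)
    (θ ρ : ℝ) :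
    (∃ S : Set (EuclideanSpace ℝ (Fin 2)), S ⊆ frontier K ∧ IsConnected S ∧
        s ∈ S ∧ t ∈ S ∧ S ∩ R θ ρ = ∅)
      ↔ segment ℝ s t ∩ R θ ρ = ∅ :=
  stmt_13_general K hKc hKconv s t hs ht θ ρ
end
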